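/- Let θ > 0, C₁ ∈ ℝ, w₂ > 0, s₂ ∈ ℝ, T > 0, and define H = 2C₁s₂ + s₂e^{−Tθ} − (w₂e^{−Tθ} − C₁²w₂e^{Tθ})/θ + C₁²s₂e^{Tθ} + 2C₁Tw₂. Then p₂(t) = (−w₂e^{2tθ}C₁² − 2tθw₂e^{tθ}C₁ + w₂ + Hθe^{tθ})/(θ(C₁e^{tθ}+1)²) satisfies the linear ODE ṗ₂(t) = −w₂ − 2p₂(t)(θ/2 − θ/(C₁e^{θt}+1)) on any interval where C₁e^{tθ} + 1 ≠ 0, with terminal condition p₂(T) = s₂. -/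

import Mathlib

/-!
The integrating factor `μ(t) = (C₁ e^{tθ} + 1)² e^{-tθ}` of the equation satisfies `μ' = 2 a μ`,
where `a(t) = θ/2 - θ/(C₁ e^{θt} + 1)` is the closed-loop drift, because the derivative of
`C₁ e^{tθ} + 1` is `θ (C₁ e^{tθ} + 1) - θ`. Hence `(μ p₂)' = -w₂ μ`, and since
`μ = C₁² e^{tθ} + 2 C₁ + e^{-tθ}` has the explicit primitive
`A(t) = C₁² e^{tθ}/θ + 2 C₁ t - e^{-tθ}/θ`, every solution is `p₂ = (K - w₂ A)/μ` for a constant `K`.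
The terminal condition forces `K = s₂ μ(T) + w₂ A(T)`, which is `H`, and clearing the factor
`e^{-tθ}` from `(H - w₂ A)/μ` gives the stated closed form.
-/

open Real

theorem HasDerivAt.div_integratingFactor {𝕜 : Type*} [NontriviallyNormedField 𝕜]
    {F μ : 𝕜 → 𝕜} {g a t : 𝕜}
    (hF : HasDerivAt F (g * μ t) t) (hμ : HasDerivAt μ (a * μ t) t) (hμt : μ t ≠ 0) :
    HasDerivAt (fun s => F s / μ s) (g - a * (F t / μ t)) t := by
  refine (hF.div hμ hμt).congr_deriv ?_
  field_simp

lemma Real.hasDerivAt_exp_mul (c t : ℝ) :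
    HasDerivAt (fun s => exp (s * c)) (c * exp (t * c)) t := by
  simpa [mul_comm] using ((hasDerivAt_id t).mul_const c).exp

lemma Real.hasDerivAt_exp_neg_mul (c t : ℝ) :
    HasDerivAt (fun s => exp (-s * c)) (-c * exp (-t * c)) t := by
  simpa [neg_mul_comm] using hasDerivAt_exp_mul (-c) t

lemma Real.exp_neg_mul_eq_inv (t c : ℝ) : exp (-t * c) = (exp (t * c))⁻¹ := by
  rw [neg_mul, exp_neg]

noncomputable section

namespace LQGame

variable (θ C₁ : ℝ)

def closedLoopDrift (t : ℝ) : ℝ := θ / 2 - θ / (C₁ * exp (θ * t) + 1)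

def integratingFactor (t : ℝ) : ℝ := (C₁ * exp (t * θ) + 1) ^ 2 * exp (-t * θ)

def integratingFactorPrimitive (t : ℝ) : ℝ :=
  C₁ ^ 2 * exp (t * θ) / θ + 2 * C₁ * t - exp (-t * θ) / θ

variable {θ C₁}

lemma integratingFactor_ne_zero {t : ℝ} (ht : C₁ * exp (t * θ) + 1 ≠ 0) :
    integratingFactor θ C₁ t ≠ 0 :=
  mul_ne_zero (pow_ne_zero 2 ht) (exp_pos _).ne'

lemma hasDerivAt_integratingFactor {t : ℝ} (ht : C₁ * exp (t * θ) + 1 ≠ 0) :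
    HasDerivAt (integratingFactor θ C₁)
      (2 * closedLoopDrift θ C₁ t * integratingFactor θ C₁ t) t := by
  refine (((((hasDerivAt_exp_mul θ t).const_mul C₁).add_const 1).fun_pow 2).mul
    (hasDerivAt_exp_neg_mul θ t)).congr_deriv ?_
  rw [closedLoopDrift, integratingFactor, mul_comm θ t]
  field_simp
  ring

lemma hasDerivAt_integratingFactorPrimitive (hθ : θ ≠ 0) (t : ℝ) :
    HasDerivAt (integratingFactorPrimitive θ C₁) (integratingFactor θ C₁ t) t := by
  refine (((((hasDerivAt_exp_mul θ t).const_mul (C₁ ^ 2)).div_const θ).add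
    ((hasDerivAt_id t).const_mul (2 * C₁))).sub
      ((hasDerivAt_exp_neg_mul θ t).div_const θ)).congr_deriv ?_
  rw [integratingFactor, exp_neg_mul_eq_inv]
  field_simp
  ring

lemma hasDerivAt_div_integratingFactor (hθ : θ ≠ 0) (K w : ℝ) {t : ℝ}
    (ht : C₁ * exp (t * θ) + 1 ≠ 0) :
    HasDerivAt (fun s => (K - w * integratingFactorPrimitive θ C₁ s) / integratingFactor θ C₁ s)
      (-w - 2 * closedLoopDrift θ C₁ t *
        ((K - w * integratingFactorPrimitive θ C₁ t) / integratingFactor θ C₁ t)) t := by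
  refine HasDerivAt.div_integratingFactor ?_ (hasDerivAt_integratingFactor ht)
    (integratingFactor_ne_zero ht)
  simpa using ((hasDerivAt_integratingFactorPrimitive hθ t).const_mul w).const_sub K

lemma closedForm_eq_div_integratingFactor (hθ : θ ≠ 0) (K w t : ℝ) :
    (-w * exp (2 * t * θ) * C₁ ^ 2 - 2 * t * θ * w * exp (t * θ) * C₁
          + w + K * θ * exp (t * θ)) / (θ * (C₁ * exp (t * θ) + 1) ^ 2) =
      (K - w * integratingFactorPrimitive θ C₁ t) / integratingFactor θ C₁ t := by
  by_cases ht : C₁ * exp (t * θ) + 1 = 0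
  · simp [integratingFactor, ht]
  have hexp2 : exp (2 * t * θ) = exp (t * θ) ^ 2 := by rw [← exp_nat_mul]; ring_nf
  rw [div_eq_div_iff (mul_ne_zero hθ (pow_ne_zero 2 ht)) (integratingFactor_ne_zero ht),
    hexp2, integratingFactor, integratingFactorPrimitive, exp_neg_mul_eq_inv]
  field_simp
  ring

end LQGame

end

open LQGame in
theorem p2_closed_form_general (θ C₁ w₂ s₂ T : ℝ)
    (hθ : 0 < θ)
    (hTden : C₁ * Real.exp (T * θ) + 1 ≠ 0) :
    let H := 2 * C₁ * s₂ + s₂ * Real.exp (-T * θ)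
      - (w₂ * Real.exp (-T * θ) - C₁ ^ 2 * w₂ * Real.exp (T * θ)) / θ
      + C₁ ^ 2 * s₂ * Real.exp (T * θ) + 2 * C₁ * T * w₂
    let p₂ := fun t : ℝ =>
      (-w₂ * Real.exp (2 * t * θ) * C₁ ^ 2 - 2 * t * θ * w₂ * Real.exp (t * θ) * C₁
          + w₂ + H * θ * Real.exp (t * θ)) / (θ * (C₁ * Real.exp (t * θ) + 1) ^ 2)
    (∀ t : ℝ, C₁ * Real.exp (t * θ) + 1 ≠ 0 →
        HasDerivAt p₂ (-w₂ - 2 * p₂ t * (θ / 2 - θ / (C₁ * Real.exp (θ * t) + 1))) t) ∧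
      p₂ T = s₂ := by
  intro H p₂
  have hH : H = s₂ * integratingFactor θ C₁ T + w₂ * integratingFactorPrimitive θ C₁ T := by
    simp only [H, integratingFactor, integratingFactorPrimitive, exp_neg_mul_eq_inv]
    field_simp
    ring
  have hp₂ : p₂ = fun t =>
      (H - w₂ * integratingFactorPrimitive θ C₁ t) / integratingFactor θ C₁ t :=
    funext (closedForm_eq_div_integratingFactor hθ.ne' H w₂)
  refine ⟨fun t ht => ?_, ?_⟩
  · rw [hp₂]
    refine (hasDerivAt_div_integratingFactor hθ.ne' H w₂ ht).congr_deriv ?_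
    rw [closedLoopDrift]
    ring
  · simp only [hp₂, hH]
    rw [add_sub_cancel_right,
      mul_div_cancel_right₀ _ (integratingFactor_ne_zero hTden)]

/-- Closed-form solution of the linear ODE for the quadratic coefficient p₂ of
Player 2's value function:
ṗ₂(t) = −w₂ − 2p₂(t)(θ/2 − θ/(C₁e^{θt}+1)) with p₂(T) = s₂. -/
theorem p2_closed_form (θ C₁ w₂ s₂ T : ℝ)
    (hθ : 0 < θ) (hw : 0 < w₂) (hT : 0 < T)
    (hTden : C₁ * Real.exp (T * θ) + 1 ≠ 0) :
    let H := 2 * C₁ * s₂ + s₂ * Real.exp (-T * θ)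
      - (w₂ * Real.exp (-T * θ) - C₁ ^ 2 * w₂ * Real.exp (T * θ)) / θ
      + C₁ ^ 2 * s₂ * Real.exp (T * θ) + 2 * C₁ * T * w₂
    let p₂ := fun t : ℝ =>
      (-w₂ * Real.exp (2 * t * θ) * C₁ ^ 2 - 2 * t * θ * w₂ * Real.exp (t * θ) * C₁
          + w₂ + H * θ * Real.exp (t * θ)) / (θ * (C₁ * Real.exp (t * θ) + 1) ^ 2)
    (∀ t : ℝ, C₁ * Real.exp (t * θ) + 1 ≠ 0 →
        HasDerivAt p₂ (-w₂ - 2 * p₂ t * (θ / 2 - θ / (C₁ * Real.exp (θ * t) + 1))) t) ∧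
      p₂ T = s₂ :=
  p2_closed_form_general θ C₁ w₂ s₂ T hθ hTden
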